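/- arXiv:2407.07172 — 8 statements merged into one kernel-verified Lean document; each statement's English description precedes it below -/
import Mathlib

section
/- Let ψ, θ : ℝ → ℝ be differentiable functions satisfying ψ'(t) = −cosh(ψ(t)) · tanh(θ(t)) and θ'(t) = sinh(ψ(t)) for all t. Then the function t ↦ cosh(ψ(t)) · cosh(θ(t)) is constant. -/
open Real

/-- Along solutions of `ψ' = -cosh ψ · tanh θ`, `θ' = sinh ψ`, the quantity
`cosh ψ · cosh θ` is a first integral. -/
theorem stmt_3 (ψ θ : ℝ → ℝ) (hψ : Differentiable ℝ ψ) (hθ : Differentiable ℝ θ)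
    (hψ' : ∀ t, deriv ψ t = -cosh (ψ t) * tanh (θ t))
    (hθ' : ∀ t, deriv θ t = sinh (ψ t)) :
    ∀ s t : ℝ, cosh (ψ s) * cosh (θ s) = cosh (ψ t) * cosh (θ t) := by
  have key : ∀ s t : ℝ, (fun u => cosh (ψ u) * cosh (θ u)) s
      = (fun u => cosh (ψ u) * cosh (θ u)) t := by
    apply is_const_of_deriv_eq_zero
    · exact ((Real.differentiable_cosh.comp hψ).mul (Real.differentiable_cosh.comp hθ))
    · intro x
      have h1 : HasDerivAt ψ (deriv ψ x) x := (hψ x).hasDerivAt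
      have h2 : HasDerivAt θ (deriv θ x) x := (hθ x).hasDerivAt
      have hc1 := (Real.hasDerivAt_cosh (ψ x)).comp x h1
      have hc2 := (Real.hasDerivAt_cosh (θ x)).comp x h2
      have H : HasDerivAt (fun u => cosh (ψ u) * cosh (θ u))
          (sinh (ψ x) * deriv ψ x * cosh (θ x) + cosh (ψ x) * (sinh (θ x) * deriv θ x)) x :=
        hc1.mul hc2
      rw [H.deriv, hψ' x, hθ' x, Real.tanh_eq_sinh_div_cosh]
      have hc : Real.cosh (θ x) ≠ 0 := (Real.cosh_pos _).ne'
      field_simp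
      ring
  exact key
end

section
/- Let ψ₀ ∈ ℝ and set s₀ = sinh ψ₀, c₀ = cosh ψ₀. Define on the interval (−π/2, π/2) the functions ψ(t) = arsinh(s₀ · cos t / √(1 + s₀² · sin² t)), θ(t) = arsinh(s₀ · sin t), φ(t) = arctan(c₀ · tan t). Then for all t ∈ (−π/2, π/2): ψ'(t) = −cosh(ψ(t)) · tanh(θ(t)), θ'(t) = sinh(ψ(t)), φ'(t) = cosh(ψ(t)) / cosh(θ(t)), and moreover ψ(0) = ψ₀, θ(0) = 0, φ(0) = 0. -/
/-!
With `Q t = 1 + s₀² sin² t` and `c₀² = 1 + s₀²`, one has `cosh θ = √Q` and `cosh ψ = c₀ / √Q`,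
so the three right-hand sides become `-c₀ s₀ sin t / Q`, `s₀ cos t / √Q` and `c₀ / Q`. Each is
checked against the derivative of the explicit formula by the chain rule; for `φ` the identity
`cos² t + c₀² sin² t = Q` does the job.
-/

open Real

lemma one_add_sq_mul_sin_sq_pos (s t : ℝ) : 0 < 1 + s ^ 2 * sin t ^ 2 := by positivity

lemma cosh_arsinh_mul_sin (s t : ℝ) :
    cosh (arsinh (s * sin t)) = √(1 + s ^ 2 * sin t ^ 2) := by
  rw [cosh_arsinh, mul_pow]

lemma tanh_arsinh_mul_sin (s t : ℝ) :
    tanh (arsinh (s * sin t)) = s * sin t / √(1 + s ^ 2 * sin t ^ 2) := by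
  rw [tanh_eq_sinh_div_cosh, sinh_arsinh, cosh_arsinh_mul_sin]

lemma cosh_arsinh_mul_cos_div {s c : ℝ} (hc : 0 ≤ c) (hcs : c ^ 2 = 1 + s ^ 2) (t : ℝ) :
    cosh (arsinh (s * cos t / √(1 + s ^ 2 * sin t ^ 2))) = c / √(1 + s ^ 2 * sin t ^ 2) := by
  have hQ := one_add_sq_mul_sin_sq_pos s t
  have h : 1 + (s * cos t / √(1 + s ^ 2 * sin t ^ 2)) ^ 2 = c ^ 2 / (1 + s ^ 2 * sin t ^ 2) := by
    rw [div_pow, sq_sqrt hQ.le]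
    field_simp
    linear_combination s ^ 2 * sin_sq_add_cos_sq t - hcs
  rw [cosh_arsinh, h, sqrt_div (sq_nonneg c), sqrt_sq hc]

lemma hasDerivAt_arsinh_mul_sin (s t : ℝ) :
    HasDerivAt (fun x => arsinh (s * sin x)) (s * cos t / √(1 + s ^ 2 * sin t ^ 2)) t := by
  refine ((hasDerivAt_arsinh _).comp t ((hasDerivAt_sin t).const_mul s)).congr_deriv ?_
  rw [mul_pow, div_eq_inv_mul]

lemma hasDerivAt_arsinh_mul_cos_div {s c : ℝ} (hc : 0 < c) (hcs : c ^ 2 = 1 + s ^ 2) (t : ℝ) :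
    HasDerivAt (fun x => arsinh (s * cos x / √(1 + s ^ 2 * sin x ^ 2)))
      (-(c * s * sin t) / (1 + s ^ 2 * sin t ^ 2)) t := by
  have hQ := one_add_sq_mul_sin_sq_pos s t
  have hsqrt : HasDerivAt (fun x => √(1 + s ^ 2 * sin x ^ 2))
      (s ^ 2 * sin t * cos t / √(1 + s ^ 2 * sin t ^ 2)) t := by
    refine ((((hasDerivAt_sin t).fun_pow 2).const_mul (s ^ 2)).const_add 1).sqrt hQ.ne'
      |>.congr_deriv ?_
    field_simp
    ring
  have hu := ((hasDerivAt_cos t).const_mul s).fun_div hsqrt (sqrt_pos.2 hQ).ne'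
  refine ((hasDerivAt_arsinh _).comp t hu).congr_deriv ?_
  rw [← cosh_arsinh, cosh_arsinh_mul_cos_div hc.le hcs]
  field_simp
  rw [sq_sqrt hQ.le]
  linear_combination s * sin t * (1 + s ^ 2 * sin t ^ 2) * (hcs - s ^ 2 * sin_sq_add_cos_sq t)

lemma hasDerivAt_arctan_mul_tan (c : ℝ) {t : ℝ} (ht : cos t ≠ 0) :
    HasDerivAt (fun x => arctan (c * tan x)) (c / (cos t ^ 2 + c ^ 2 * sin t ^ 2)) t := by
  refine ((hasDerivAt_arctan _).comp t ((hasDerivAt_tan ht).const_mul c)).congr_deriv ?_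
  rw [tan_eq_sin_div_cos]
  field_simp

/-- Explicit solution of the normal Hamiltonian system
`ψ' = -cosh ψ · tanh θ`, `θ' = sinh ψ`, `φ' = cosh ψ / cosh θ`
with initial conditions `ψ(0) = ψ₀`, `θ(0) = 0`, `φ(0) = 0`, on `(-π/2, π/2)`. -/
theorem stmt_4 (ψ₀ : ℝ) (s₀ c₀ : ℝ) (hs₀ : s₀ = sinh ψ₀) (hc₀ : c₀ = cosh ψ₀)
    (ψ θ φ : ℝ → ℝ)
    (hψ : ∀ t, ψ t = arsinh (s₀ * cos t / sqrt (1 + s₀ ^ 2 * sin t ^ 2)))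
    (hθ : ∀ t, θ t = arsinh (s₀ * sin t))
    (hφ : ∀ t, φ t = arctan (c₀ * tan t)) :
    (∀ t ∈ Set.Ioo (-(π / 2)) (π / 2),
      HasDerivAt ψ (-cosh (ψ t) * tanh (θ t)) t ∧
      HasDerivAt θ (sinh (ψ t)) t ∧
      HasDerivAt φ (cosh (ψ t) / cosh (θ t)) t) ∧
    ψ 0 = ψ₀ ∧ θ 0 = 0 ∧ φ 0 = 0 := by
  obtain rfl : ψ = _ := funext hψ
  obtain rfl : θ = _ := funext hθ
  obtain rfl : φ = _ := funext hφ
  have hc : 0 < c₀ := hc₀ ▸ cosh_pos ψ₀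
  have hcs : c₀ ^ 2 = 1 + s₀ ^ 2 := by rw [hs₀, hc₀, cosh_sq]; ring
  have hQ := one_add_sq_mul_sin_sq_pos s₀
  refine ⟨fun t ht => ⟨?_, ?_, ?_⟩, by simp [hs₀], by simp, by simp⟩
  · refine (hasDerivAt_arsinh_mul_cos_div hc hcs t).congr_deriv ?_
    rw [cosh_arsinh_mul_cos_div hc.le hcs, tanh_arsinh_mul_sin]
    field_simp
    rw [sq_sqrt (hQ t).le]
  · simpa only [sinh_arsinh] using hasDerivAt_arsinh_mul_sin s₀ t
  · have hQ' : cos t ^ 2 + c₀ ^ 2 * sin t ^ 2 = 1 + s₀ ^ 2 * sin t ^ 2 := by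
      linear_combination cos_sq_add_sin_sq t + sin t ^ 2 * hcs
    refine (hasDerivAt_arctan_mul_tan c₀ (cos_pos_of_mem_Ioo ht).ne').congr_deriv ?_
    rw [cosh_arsinh_mul_cos_div hc.le hcs, cosh_arsinh_mul_sin, div_div, mul_self_sqrt (hQ t).le, hQ']
end

section
/- The map F : ℝ × (0, π/2) → ℝ², F(ψ, t) = (sinh ψ · sin t, cosh ψ · tan t), is a bijection from ℝ × (0, π/2) onto the set B = {(X, Y) ∈ ℝ² : Y > |X|}. -/
open Real Set

/-! Everything rests on the identity `1 + X² = cos² t · (1 + Y²)` for `(X, Y) = F(ψ, t)`: on `(0, π/2)` it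
recovers `t` from the image point through `cos t = √((1 + X²) / (1 + Y²))`, and then `ψ` from
`sinh ψ = X / sin t`. Conversely these formulas define a preimage of any point with `Y > |X|`,
the inequality being exactly what puts `cos t` in `(0, 1)`. -/

theorem abs_sinh_lt_cosh (x : ℝ) : |sinh x| < cosh x := by
  rw [abs_sinh, ← cosh_abs]
  exact sinh_lt_cosh _

theorem one_add_sq_sinh_mul_sin (ψ t : ℝ) (ht : cos t ≠ 0) :
    1 + (sinh ψ * sin t) ^ 2 = cos t ^ 2 * (1 + (cosh ψ * tan t) ^ 2) := by
  rw [tan_eq_sin_div_cos]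
  field_simp
  linear_combination (-sin t ^ 2) * cosh_sq ψ - sin_sq_add_cos_sq t

/-- The exponential map of the anti-de Sitter plane in the coordinates `(sinh θ, tan φ)`. -/
noncomputable def antiDeSitterExp (p : ℝ × ℝ) : ℝ × ℝ :=
  (sinh p.1 * sin p.2, cosh p.1 * tan p.2)

theorem antiDeSitterExp_mapsTo :
    MapsTo antiDeSitterExp (univ ×ˢ Ioo 0 (π / 2)) {q | q.2 > |q.1|} := by
  rintro ⟨ψ, t⟩ ⟨-, ht0, ht1⟩
  have hsin : 0 < sin t := sin_pos_of_pos_of_lt_pi ht0 (by linarith [pi_pos])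
  show |sinh ψ * sin t| < cosh ψ * tan t
  calc |sinh ψ * sin t| = |sinh ψ| * sin t := by rw [abs_mul, abs_of_pos hsin]
    _ < cosh ψ * sin t := mul_lt_mul_of_pos_right (abs_sinh_lt_cosh ψ) hsin
    _ < cosh ψ * tan t :=
      mul_lt_mul_of_pos_left ((sin_lt ht0).trans (lt_tan ht0 ht1)) (cosh_pos ψ)

theorem antiDeSitterExp_injOn : InjOn antiDeSitterExp (univ ×ˢ Ioo 0 (π / 2)) := by
  rintro ⟨ψ₁, t₁⟩ ⟨-, ht₁0, ht₁1⟩ ⟨ψ₂, t₂⟩ ⟨-, ht₂0, ht₂1⟩ heq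
  obtain ⟨hX, hY⟩ := Prod.ext_iff.1 heq
  simp only [antiDeSitterExp] at hX hY
  have hcos₁ : 0 < cos t₁ := cos_pos_of_mem_Ioo ⟨by linarith, ht₁1⟩
  have hcos₂ : 0 < cos t₂ := cos_pos_of_mem_Ioo ⟨by linarith, ht₂1⟩
  have hcos_sq : cos t₁ ^ 2 = cos t₂ ^ 2 := by
    have h₁ := one_add_sq_sinh_mul_sin ψ₁ t₁ hcos₁.ne'
    have h₂ := one_add_sq_sinh_mul_sin ψ₂ t₂ hcos₂.ne'
    rw [hX, hY, h₂] at h₁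
    exact (mul_right_cancel₀ (by positivity) h₁).symm
  have ht : t₁ = t₂ := injOn_cos ⟨ht₁0.le, by linarith⟩ ⟨ht₂0.le, by linarith⟩
    ((pow_left_inj₀ hcos₁.le hcos₂.le two_ne_zero).1 hcos_sq)
  subst ht
  have hsin : sin t₁ ≠ 0 := (sin_pos_of_pos_of_lt_pi ht₁0 (by linarith)).ne'
  rw [sinh_injective (mul_right_cancel₀ hsin hX)]

theorem antiDeSitterExp_surjOn :
    SurjOn antiDeSitterExp (univ ×ˢ Ioo 0 (π / 2)) {q | q.2 > |q.1|} := by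
  rintro ⟨X, Y⟩ (hXY : |X| < Y)
  have hY : 0 < Y := (abs_nonneg X).trans_lt hXY
  have hsq : X ^ 2 < Y ^ 2 := sq_lt_sq' (abs_lt.1 hXY).1 (abs_lt.1 hXY).2
  set c := √((1 + X ^ 2) / (1 + Y ^ 2))
  have hc_sq : c ^ 2 = (1 + X ^ 2) / (1 + Y ^ 2) := sq_sqrt (by positivity)
  have hc0 : 0 < c := by positivity
  have hc1 : c < 1 := 
    (sqrt_lt' one_pos).2 (by rw [one_pow, div_lt_one (by positivity)]; linarith)
  set t := arccos c
  have ht0 : 0 < t := arccos_pos.2 hc1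
  have ht1 : t < π / 2 := arccos_lt_pi_div_two.2 hc0
  have hcos : cos t = c := cos_arccos (by linarith) hc1.le
  have hsin : 0 < sin t := sin_pos_of_pos_of_lt_pi ht0 (by linarith [pi_pos])
  set ψ := arsinh (X / sin t)
  have hX : sinh ψ * sin t = X := by rw [sinh_arsinh, div_mul_cancel₀ _ hsin.ne']
  refine ⟨(ψ, t), ⟨mem_univ _, ht0, ht1⟩, Prod.ext hX ?_⟩
  show cosh ψ * tan t = Y
  have htan : 0 < tan t := tan_pos_of_pos_of_lt_pi_div_two ht0 ht1
  have hY_sq : (cosh ψ * tan t) ^ 2 = Y ^ 2 := by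
    have h := one_add_sq_sinh_mul_sin ψ t (hcos ▸ hc0).ne'
    rw [hX, hcos, hc_sq] at h
    field_simp at h
    linarith
  exact (pow_left_inj₀ (by positivity) hY.le two_ne_zero).1 hY_sq

/-- The map `F(ψ, t) = (sinh ψ · sin t, cosh ψ · tan t)` is a bijection from
`ℝ × (0, π/2)` onto `B = {(X, Y) : Y > |X|}`. -/
theorem stmt_6 (F : ℝ × ℝ → ℝ × ℝ)
    (hF : ∀ p : ℝ × ℝ, F p = (sinh p.1 * sin p.2, cosh p.1 * tan p.2)) :
    Set.BijOn F (Set.univ ×ˢ Set.Ioo 0 (π / 2))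
      {q : ℝ × ℝ | q.2 > |q.1|} := by
  obtain rfl : F = antiDeSitterExp := funext hF
  exact ⟨antiDeSitterExp_mapsTo, antiDeSitterExp_injOn, antiDeSitterExp_surjOn⟩
end

section
/- Let (X, Y) ∈ ℝ² satisfy Y > |X|. Define t = arcsin(√((Y² − X²) / (1 + Y²))) and ψ = arsinh(X · √((1 + Y²) / (Y² − X²))). Then t ∈ (0, π/2], sinh ψ · sin t = X, and cosh ψ · tan t = Y. -/
open Real

/-- Explicit inverse formulas for the exponential map
`(ψ, t) ↦ (sinh ψ · sin t, cosh ψ · tan t)` on `{(X, Y) : Y > |X|}`. -/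
theorem stmt_7 (X Y : ℝ) (hXY : Y > |X|)
    (t ψ : ℝ)
    (ht : t = arcsin (sqrt ((Y ^ 2 - X ^ 2) / (1 + Y ^ 2))))
    (hψ : ψ = arsinh (X * sqrt ((1 + Y ^ 2) / (Y ^ 2 - X ^ 2)))) :
    t ∈ Set.Ioc 0 (π / 2) ∧ sinh ψ * sin t = X ∧ cosh ψ * tan t = Y := by
  have hY : 0 < Y := lt_of_le_of_lt (abs_nonneg X) hXY
  have hX2 : X ^ 2 < Y ^ 2 := by
    have := sq_lt_sq' (neg_lt_of_abs_lt hXY) (lt_of_abs_lt hXY)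
    simpa using this
  have ha : 0 < Y ^ 2 - X ^ 2 := by linarith
  have hb : (0:ℝ) < 1 + Y ^ 2 := by positivity
  have hc : (0:ℝ) < 1 + X ^ 2 := by positivity
  have hA0 : 0 < (Y ^ 2 - X ^ 2) / (1 + Y ^ 2) := div_pos ha hb
  have hA1 : (Y ^ 2 - X ^ 2) / (1 + Y ^ 2) ≤ 1 := by
    rw [div_le_one hb]; nlinarith
  have hsqle : sqrt ((Y ^ 2 - X ^ 2) / (1 + Y ^ 2)) ≤ 1 := by
    exact Real.sqrt_le_one.mpr hA1
  have hsin : sin t = sqrt ((Y ^ 2 - X ^ 2) / (1 + Y ^ 2)) := by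
    rw [ht, Real.sin_arcsin (le_trans (by norm_num) (Real.sqrt_nonneg _)) hsqle]
  have hsin2 : sin t ^ 2 = (Y ^ 2 - X ^ 2) / (1 + Y ^ 2) := by
    rw [hsin, Real.sq_sqrt hA0.le]
  have hcos : cos t = sqrt ((1 + X ^ 2) / (1 + Y ^ 2)) := by
    rw [ht, Real.cos_arcsin, Real.sq_sqrt hA0.le]
    congr 1
    field_simp
    ring
  have hcospos : 0 < cos t := by
    rw [hcos]; exact Real.sqrt_pos.mpr (div_pos hc hb)
  have hcos2 : cos t ^ 2 = (1 + X ^ 2) / (1 + Y ^ 2) := by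
    rw [hcos, Real.sq_sqrt (div_pos hc hb).le]
  have hsinh : sinh ψ = X * sqrt ((1 + Y ^ 2) / (Y ^ 2 - X ^ 2)) := by
    rw [hψ, Real.sinh_arsinh]
  have hmem : t ∈ Set.Ioc 0 (π / 2) := by
    constructor
    · rw [ht]
      exact Real.arcsin_pos.mpr (Real.sqrt_pos.mpr hA0)
    · rw [ht]; exact Real.arcsin_le_pi_div_two _
  refine ⟨hmem, ?_, ?_⟩
  · rw [hsinh, hsin, mul_assoc, ← Real.sqrt_mul (div_pos hb ha).le]
    rw [show (1 + Y ^ 2) / (Y ^ 2 - X ^ 2) * ((Y ^ 2 - X ^ 2) / (1 + Y ^ 2)) = 1 by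
      field_simp]
    simp
  · have hcosh2 : cosh ψ ^ 2 = X ^ 2 * ((1 + Y ^ 2) / (Y ^ 2 - X ^ 2)) + 1 := by
      rw [Real.cosh_sq, hsinh, mul_pow, Real.sq_sqrt (div_pos hb ha).le]
    have htan : tan t = sin t / cos t := Real.tan_eq_sin_div_cos t
    have htanpos : 0 ≤ tan t := by
      rw [htan]
      exact div_nonneg (by rw [hsin]; exact Real.sqrt_nonneg _) hcospos.le
    have hsq : (cosh ψ * tan t) ^ 2 = Y ^ 2 := by
      rw [mul_pow, hcosh2, htan, div_pow, hsin2, hcos2]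
      field_simp
      ring
    have hnn : 0 ≤ cosh ψ * tan t := mul_nonneg (Real.cosh_pos ψ).le htanpos
    calc cosh ψ * tan t = sqrt ((cosh ψ * tan t) ^ 2) := (Real.sqrt_sq hnn).symm
      _ = sqrt (Y ^ 2) := by rw [hsq]
      _ = Y := Real.sqrt_sq hY.le
end

section
/- Let θ ∈ ℝ and φ ∈ (π/2, π) satisfy tan² φ > sinh² θ. Define t = π − arcsin(√((tan² φ − sinh² θ) / (1 + tan² φ))) and ψ = arsinh(sinh θ · √((1 + tan² φ) / (tan² φ − sinh² θ))). Then t ∈ (π/2, π), arsinh(sinh ψ · sin t) = θ, and π − arctan(cosh ψ · tan(π − t)) = φ. -/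
open Real

/-- Inverse formulas for the second branch (`t ∈ (π/2, π)`) of the exponential map
of the Lorentzian problem on the anti-de Sitter plane. -/
theorem stmt_8 (θ φ : ℝ) (hφ : φ ∈ Set.Ioo (π / 2) π)
    (h : tan φ ^ 2 > sinh θ ^ 2)
    (t ψ : ℝ)
    (ht : t = π - arcsin (sqrt ((tan φ ^ 2 - sinh θ ^ 2) / (1 + tan φ ^ 2))))
    (hψ : ψ = arsinh (sinh θ * sqrt ((1 + tan φ ^ 2) / (tan φ ^ 2 - sinh θ ^ 2)))) :
    t ∈ Set.Ioo (π / 2) π ∧ arsinh (sinh ψ * sin t) = θ ∧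
      π - arctan (cosh ψ * tan (π - t)) = φ := by
  obtain ⟨hφ1, hφ2⟩ := hφ
  have ha : 0 < tan φ ^ 2 - sinh θ ^ 2 := by linarith
  have hb : 0 < 1 + tan φ ^ 2 := by positivity
  have hsθ : (0:ℝ) ≤ sinh θ ^ 2 := sq_nonneg _
  set s := sqrt ((tan φ ^ 2 - sinh θ ^ 2) / (1 + tan φ ^ 2)) with hs
  have hs0 : 0 < s := Real.sqrt_pos.mpr (div_pos ha hb)
  have hs2 : s ^ 2 = (tan φ ^ 2 - sinh θ ^ 2) / (1 + tan φ ^ 2) :=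
    Real.sq_sqrt (le_of_lt (div_pos ha hb))
  have hs1 : s < 1 := by
    have h1 : (tan φ ^ 2 - sinh θ ^ 2) / (1 + tan φ ^ 2) < 1 := (div_lt_one hb).mpr (by linarith)
    nlinarith [hs2]
  have hA1 : 0 < arcsin s := Real.arcsin_pos.mpr hs0
  have hA2 : arcsin s < π / 2 := Real.arcsin_lt_pi_div_two.mpr hs1
  -- tan φ is negative
  have htanpos : 0 < tan (π - φ) := Real.tan_pos_of_pos_of_lt_pi_div_two (by linarith) (by linarith)
  have htanφ : tan φ < 0 := by
    rw [Real.tan_pi_sub] at htanpos; linarith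
  refine ⟨⟨by rw [ht]; linarith, by rw [ht]; linarith⟩, ?_, ?_⟩
  · -- second component
    have hsin : sin t = s := by
      rw [ht, Real.sin_pi_sub, Real.sin_arcsin (by linarith) hs1.le]
    have hsinh : sinh ψ = sinh θ * sqrt ((1 + tan φ ^ 2) / (tan φ ^ 2 - sinh θ ^ 2)) := by
      rw [hψ, Real.sinh_arsinh]
    have hprod : sqrt ((1 + tan φ ^ 2) / (tan φ ^ 2 - sinh θ ^ 2)) * s = 1 := by
      rw [hs, ← Real.sqrt_mul (by positivity)]
      rw [show (1 + tan φ ^ 2) / (tan φ ^ 2 - sinh θ ^ 2) *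
          ((tan φ ^ 2 - sinh θ ^ 2) / (1 + tan φ ^ 2)) = 1 by field_simp]
      exact Real.sqrt_one
    rw [hsin, hsinh, mul_assoc, hprod, mul_one, Real.arsinh_sinh]
  · -- third component
    have hπt : π - t = arcsin s := by rw [ht]; ring
    have hw : 1 - s ^ 2 = (1 + sinh θ ^ 2) / (1 + tan φ ^ 2) := by
      rw [hs2]; field_simp; ring
    have htan : tan (π - t) = s / sqrt ((1 + sinh θ ^ 2) / (1 + tan φ ^ 2)) := by
      rw [hπt, Real.tan_arcsin, hw]
    have hcosh : cosh ψ =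
        sqrt (1 + sinh θ ^ 2 * ((1 + tan φ ^ 2) / (tan φ ^ 2 - sinh θ ^ 2))) := by
      rw [hψ, Real.cosh_arsinh, mul_pow,
        Real.sq_sqrt (by positivity : (0:ℝ) ≤ (1 + tan φ ^ 2) / (tan φ ^ 2 - sinh θ ^ 2))]
    have hkey : cosh ψ * tan (π - t) = -tan φ := by
      rw [htan, hcosh, hs,
        ← Real.sqrt_div (le_of_lt (div_pos ha hb)), ← Real.sqrt_mul (by positivity)]
      rw [show (1 + sinh θ ^ 2 * ((1 + tan φ ^ 2) / (tan φ ^ 2 - sinh θ ^ 2))) *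
          ((tan φ ^ 2 - sinh θ ^ 2) / (1 + tan φ ^ 2) /
            ((1 + sinh θ ^ 2) / (1 + tan φ ^ 2))) = tan φ ^ 2 by
        rw [eq_comm]; field_simp; ring]
      rw [Real.sqrt_sq_eq_abs, abs_of_neg htanφ]
    rw [hkey, show -tan φ = tan (π - φ) from (Real.tan_pi_sub φ).symm,
      Real.arctan_tan (by linarith) (by linarith)]
    ring
end

section
/- Let T > 0 and let θ, φ : [0, T] → ℝ be differentiable functions such that cosh(θ(t)) · φ'(t) ≥ |θ'(t)| for all t ∈ [0, T]. Then φ(T) − φ(0) ≥ |arctan(sinh(θ(T))) − arctan(sinh(θ(0)))|. -/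
open Real

/-- Monotonicity along admissible trajectories: if
`cosh(θ(t)) · φ'(t) ≥ |θ'(t)|` on `[0, T]`, then
`φ(T) - φ(0) ≥ |arctan(sinh θ(T)) - arctan(sinh θ(0))|`. -/
theorem stmt_9 (T : ℝ) (hT : 0 < T) (θ φ : ℝ → ℝ)
    (hθ : ∀ t ∈ Set.Icc 0 T, DifferentiableAt ℝ θ t)
    (hφ : ∀ t ∈ Set.Icc 0 T, DifferentiableAt ℝ φ t)
    (h : ∀ t ∈ Set.Icc 0 T, cosh (θ t) * deriv φ t ≥ |deriv θ t|) :
    φ T - φ 0 ≥ |arctan (sinh (θ T)) - arctan (sinh (θ 0))| := by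
  set g : ℝ → ℝ := fun t => arctan (sinh (θ t)) with hg
  have hgd : ∀ t ∈ Set.Icc 0 T, HasDerivAt g (deriv θ t / cosh (θ t)) t := by
    intro t ht
    have h1 : HasDerivAt θ (deriv θ t) t := (hθ t ht).hasDerivAt
    have h2 := (h1.sinh).arctan
    have hc : (0:ℝ) < cosh (θ t) := cosh_pos (θ t)
    have key : 1 / (1 + sinh (θ t) ^ 2) * (cosh (θ t) * deriv θ t)
        = deriv θ t / cosh (θ t) := by
      have : 1 + sinh (θ t) ^ 2 = cosh (θ t) ^ 2 := by
        rw [Real.cosh_sq]; ring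
      rw [this]; field_simp
    rw [key] at h2
    exact h2
  have hder : ∀ t ∈ Set.Icc 0 T, |deriv θ t / cosh (θ t)| ≤ deriv φ t := by
    intro t ht
    have hc : (0:ℝ) < cosh (θ t) := cosh_pos (θ t)
    rw [abs_div, abs_of_pos hc, div_le_iff₀ hc]
    calc |deriv θ t| ≤ cosh (θ t) * deriv φ t := h t ht
      _ = deriv φ t * cosh (θ t) := by ring
  -- monotonicity of φ ± g
  have aux : ∀ (s : ℝ), s = 1 ∨ s = -1 →
      φ 0 + s * g 0 ≤ φ T + s * g T := by
    intro s hs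
    have hmono : MonotoneOn (fun t => φ t + s * g t) (Set.Icc 0 T) := by
      apply monotoneOn_of_deriv_nonneg (convex_Icc 0 T)
      · exact ContinuousOn.add
          (fun t ht => (hφ t ht).continuousAt.continuousWithinAt)
          (ContinuousOn.mul continuousOn_const
            (fun t ht => ((hgd t ht).differentiableAt).continuousAt.continuousWithinAt))
      · intro t ht
        rw [interior_Icc] at ht
        have ht' : t ∈ Set.Icc 0 T := Set.Ioo_subset_Icc_self ht
        exact ((hφ t ht').add (((hgd t ht').differentiableAt).const_mul s)).differentiableWithinAt
      · intro t ht
        rw [interior_Icc] at ht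
        have ht' : t ∈ Set.Icc 0 T := Set.Ioo_subset_Icc_self ht
        have hd : HasDerivAt (fun t => φ t + s * g t)
            (deriv φ t + s * (deriv θ t / cosh (θ t))) t :=
          ((hφ t ht').hasDerivAt).add ((hgd t ht').const_mul s)
        rw [hd.deriv]
        have := hder t ht'
        rcases hs with rfl | rfl
        · have := neg_abs_le (deriv θ t / cosh (θ t))
          nlinarith [hder t ht']
        · have := le_abs_self (deriv θ t / cosh (θ t))
          nlinarith [hder t ht']
    exact hmono (Set.left_mem_Icc.2 hT.le) (Set.right_mem_Icc.2 hT.le) hT.le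
  have h1 := aux 1 (Or.inl rfl)
  have h2 := aux (-1) (Or.inr rfl)
  rw [ge_iff_le, abs_le]
  constructor <;> simp only [one_mul, neg_one_mul] at h1 h2 <;> [linarith; linarith]
end

section
/- Define vector fields on ℝ² (with coordinates (φ, θ)) by V₁(φ, θ) = (1, 0), V₂(φ, θ) = (tanh θ · cos φ, sin φ), V₃(φ, θ) = (−tanh θ · sin φ, cos φ), and define the Lie bracket of two smooth vector fields V, W : ℝ² → ℝ² by [V, W](x) = (fderiv ℝ W x)(V x) − (fderiv ℝ V x)(W x). Then [V₁, V₂] = V₃, [V₂, V₃] = −V₁, and [V₃, V₁] = V₂ (so the Lie algebra spanned by V₁, V₂, V₃ is isomorphic to sl(2)). -/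
/-!
Since `V₁ = ∂_φ` is constant, `[V₁, W] = ∂_φ W`, which turns `V₂` into `V₃` and `V₃` into `-V₂`.
For `[V₂, V₃]` the second component cancels, and the first collapses to
`-(tanh² θ + tanh' θ) = -1` once `tanh' = 1 - tanh²` and `sin² φ + cos² φ = 1` are used.
-/

open Real

/-- Lie bracket of vector fields on `ℝ²`. -/
noncomputable def lieBracketVF (V W : ℝ × ℝ → ℝ × ℝ) : ℝ × ℝ → ℝ × ℝ :=
  fun x => fderiv ℝ W x (V x) - fderiv ℝ V x (W x)

theorem Real.hasDerivAt_tanh (x : ℝ) : HasDerivAt tanh (1 - tanh x ^ 2) x := by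
  have hcosh : cosh x ≠ 0 := (cosh_pos x).ne'
  have h := (hasDerivAt_sinh x).div (hasDerivAt_cosh x) hcosh
  rw [show sinh / cosh = tanh from funext fun y => (tanh_eq_sinh_div_cosh y).symm] at h
  refine h.congr_deriv ?_
  rw [tanh_eq_sinh_div_cosh]
  field_simp

theorem lieBracketVF_swap (V W : ℝ × ℝ → ℝ × ℝ) : lieBracketVF V W = -lieBracketVF W V := by
  ext1 x
  simp [lieBracketVF]

theorem lieBracketVF_const_left (c : ℝ × ℝ) (W : ℝ × ℝ → ℝ × ℝ) (x : ℝ × ℝ) :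
    lieBracketVF (fun _ => c) W x = fderiv ℝ W x c := by
  simp [lieBracketVF]

namespace AdS2

def killing₁ : ℝ × ℝ → ℝ × ℝ := fun _ => (1, 0)

noncomputable def killing₂ (p : ℝ × ℝ) : ℝ × ℝ := (tanh p.2 * cos p.1, sin p.1)

noncomputable def killing₃ (p : ℝ × ℝ) : ℝ × ℝ := (-(tanh p.2 * sin p.1), cos p.1)

theorem fderiv_killing₂_apply (p v : ℝ × ℝ) :
    fderiv ℝ killing₂ p v =
      (-(tanh p.2 * sin p.1) * v.1 + (1 - tanh p.2 ^ 2) * cos p.1 * v.2, cos p.1 * v.1) := by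
  have ht := (hasDerivAt_tanh p.2).hasFDerivAt.comp p (hasFDerivAt_snd (p := p))
  have hc := (hasDerivAt_cos p.1).hasFDerivAt.comp p (hasFDerivAt_fst (p := p))
  have hs := (hasDerivAt_sin p.1).hasFDerivAt.comp p (hasFDerivAt_fst (p := p))
  have h : HasFDerivAt killing₂ _ p := (ht.mul hc).prodMk hs
  rw [h.fderiv]
  ext <;> simp <;> ring

theorem fderiv_killing₃_apply (p v : ℝ × ℝ) :
    fderiv ℝ killing₃ p v =
      (-(tanh p.2 * cos p.1) * v.1 - (1 - tanh p.2 ^ 2) * sin p.1 * v.2, -(sin p.1 * v.1)) := by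
  have ht := (hasDerivAt_tanh p.2).hasFDerivAt.comp p (hasFDerivAt_snd (p := p))
  have hc := (hasDerivAt_cos p.1).hasFDerivAt.comp p (hasFDerivAt_fst (p := p))
  have hs := (hasDerivAt_sin p.1).hasFDerivAt.comp p (hasFDerivAt_fst (p := p))
  have h : HasFDerivAt killing₃ _ p := (ht.mul hs).neg.prodMk hc
  rw [h.fderiv]
  ext <;> simp <;> ring

theorem lieBracketVF_killing₁_killing₂ : lieBracketVF killing₁ killing₂ = killing₃ := by
  ext1 p
  unfold killing₁
  rw [lieBracketVF_const_left, fderiv_killing₂_apply]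
  simp [killing₃]

theorem lieBracketVF_killing₂_killing₃ : lieBracketVF killing₂ killing₃ = -killing₁ := by
  ext1 p
  simp only [lieBracketVF, fderiv_killing₂_apply, fderiv_killing₃_apply, killing₁, killing₂,
    killing₃, Pi.neg_apply, Prod.mk_sub_mk, Prod.neg_mk, Prod.mk.injEq]
  constructor
  · linear_combination -sin_sq_add_cos_sq p.1
  · ring

theorem lieBracketVF_killing₃_killing₁ : lieBracketVF killing₃ killing₁ = killing₂ := by
  ext1 p
  rw [lieBracketVF_swap, Pi.neg_apply]
  unfold killing₁
  rw [lieBracketVF_const_left, fderiv_killing₃_apply]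
  simp [killing₂]

end AdS2

/-- The Killing vector fields of the anti-de Sitter plane, in coordinates `(φ, θ)`,
satisfy `[V₁, V₂] = V₃`, `[V₂, V₃] = -V₁`, `[V₃, V₁] = V₂`. -/
theorem stmt_14 (V₁ V₂ V₃ : ℝ × ℝ → ℝ × ℝ)
    (hV₁ : ∀ p : ℝ × ℝ, V₁ p = (1, 0))
    (hV₂ : ∀ p : ℝ × ℝ, V₂ p = (tanh p.2 * cos p.1, sin p.1))
    (hV₃ : ∀ p : ℝ × ℝ, V₃ p = (-(tanh p.2 * sin p.1), cos p.1)) :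
    lieBracketVF V₁ V₂ = V₃ ∧
    lieBracketVF V₂ V₃ = (fun p => -V₁ p) ∧
    lieBracketVF V₃ V₁ = V₂ := by
  obtain rfl : V₁ = AdS2.killing₁ := funext hV₁
  obtain rfl : V₂ = AdS2.killing₂ := funext hV₂
  obtain rfl : V₃ = AdS2.killing₃ := funext hV₃
  exact ⟨AdS2.lieBracketVF_killing₁_killing₂, AdS2.lieBracketVF_killing₂_killing₃,
    AdS2.lieBracketVF_killing₃_killing₁⟩
end

section
/- Let c₁, c₂ : ℝ² → ℝ (functions of (φ, θ)) be twice continuously differentiable. Then the following are equivalent: (i) for all (φ, θ): ∂_φ c₁(φ, θ) + c₂(φ, θ) · sinh θ = 0, ∂_θ c₂(φ, θ) = 0, and ∂_φ c₂(φ, θ) = cosh θ · ∂_θ c₁(φ, θ) − c₁(φ, θ) · sinh θ; (ii) there exist constants B, B₁, B₂ ∈ ℝ such that for all (φ, θ): c₁(φ, θ) = −sinh θ · (B₁ cos φ + B₂ sin φ) + B · cosh θ and c₂(φ, θ) = −B₁ sin φ + B₂ cos φ. -/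
/-!
The equation `∂_θ c₂ = 0` makes `c₂(φ, θ) = v(φ)`, so `∂_φ c₂ = v'(φ) =: w(φ)` is independent of
`θ` as well. For fixed `φ`, the third equation is the linear ODE `cosh θ · g' − sinh θ · g = w(φ)`
in `θ`, whose solutions are `g = g(0) cosh θ + w(φ) sinh θ`; on the line `θ = 0` the first
equation gives `∂_φ c₁ = 0`, so `c₁(φ, θ) = B cosh θ + w(φ) sinh θ`. Substituting this back into
the first equation gives `w' = −v`, so `(v, w)` solves the harmonic oscillator and is a
combination of `cos φ` and `sin φ`. The converse is a direct computation.
-/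

open Real

section PartialDerivatives

variable {𝕜 E : Type*} [NontriviallyNormedField 𝕜] [NormedAddCommGroup E] [NormedSpace 𝕜 E]
  {F : 𝕜 × 𝕜 → E} {x y : 𝕜}

theorem DifferentiableAt.hasDerivAt_partial_fst (hF : DifferentiableAt 𝕜 F (x, y)) :
    HasDerivAt (fun s => F (s, y)) (fderiv 𝕜 F (x, y) (1, 0)) x :=
  hF.hasFDerivAt.comp_hasDerivAt x ((hasDerivAt_id x).prodMk (hasDerivAt_const x y))

theorem DifferentiableAt.hasDerivAt_partial_snd (hF : DifferentiableAt 𝕜 F (x, y)) :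
    HasDerivAt (fun t => F (x, t)) (fderiv 𝕜 F (x, y) (0, 1)) y :=
  hF.hasFDerivAt.comp_hasDerivAt y ((hasDerivAt_const y x).prodMk (hasDerivAt_id y))

end PartialDerivatives

section LinearODE

theorem eq_of_forall_hasDerivAt_zero {E : Type*} [NormedAddCommGroup E] [NormedSpace ℝ E]
    {f : ℝ → E} (hf : ∀ x, HasDerivAt f 0 x) (x y : ℝ) : f x = f y :=
  is_const_of_deriv_eq_zero (fun x => (hf x).differentiableAt) (fun x => (hf x).deriv) x y

theorem sq_add_sq_eq_of_hasDerivAt {a b : ℝ → ℝ} (ha : ∀ x, HasDerivAt a (b x) x)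
    (hb : ∀ x, HasDerivAt b (-a x) x) (x : ℝ) : a x ^ 2 + b x ^ 2 = a 0 ^ 2 + b 0 ^ 2 := by
  refine eq_of_forall_hasDerivAt_zero (f := fun x => a x ^ 2 + b x ^ 2) (fun x => ?_) x 0
  refine (((ha x).pow 2).add ((hb x).pow 2)).congr_deriv ?_
  push_cast
  ring

theorem eq_mul_cos_add_mul_sin_of_hasDerivAt {v w : ℝ → ℝ} (hv : ∀ x, HasDerivAt v (w x) x)
    (hw : ∀ x, HasDerivAt w (-v x) x) (x : ℝ) : v x = v 0 * cos x + w 0 * sin x := by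
  have hvdiff (x : ℝ) : HasDerivAt (fun x => v x - v 0 * cos x - w 0 * sin x)
      (w x + v 0 * sin x - w 0 * cos x) x :=
    (((hv x).sub ((hasDerivAt_cos x).const_mul (v 0))).sub
      ((hasDerivAt_sin x).const_mul (w 0))).congr_deriv (by ring)
  have hwdiff (x : ℝ) : HasDerivAt (fun x => w x + v 0 * sin x - w 0 * cos x)
      (-(v x - v 0 * cos x - w 0 * sin x)) x :=
    (((hw x).add ((hasDerivAt_sin x).const_mul (v 0))).sub
      ((hasDerivAt_cos x).const_mul (w 0))).congr_deriv (by ring)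
  have henergy := sq_add_sq_eq_of_hasDerivAt hvdiff hwdiff x
  simp only [cos_zero, sin_zero, mul_one, mul_zero, add_zero, sub_self] at henergy
  nlinarith [sq_nonneg (v x - v 0 * cos x - w 0 * sin x),
    sq_nonneg (w x + v 0 * sin x - w 0 * cos x)]

theorem eq_mul_cosh_add_mul_sinh_of_hasDerivAt {g g' : ℝ → ℝ} {w : ℝ}
    (hg : ∀ t, HasDerivAt g (g' t) t) (hw : ∀ t, cosh t * g' t - g t * sinh t = w) (t : ℝ) :
    g t = g 0 * cosh t + w * sinh t := by
  have hquot (t : ℝ) :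
      HasDerivAt (fun t => (g t - g 0 * cosh t - w * sinh t) / cosh t) 0 t := by
    refine ((((hg t).sub ((hasDerivAt_cosh t).const_mul (g 0))).sub
      ((hasDerivAt_sinh t).const_mul w)).div (hasDerivAt_cosh t) (cosh_pos t).ne').congr_deriv ?_
    rw [div_eq_zero_iff]
    left
    simp only [Pi.sub_apply]
    linear_combination hw t - w * cosh_sq_sub_sinh_sq t
  have := eq_of_forall_hasDerivAt_zero hquot t 0
  simp only [cosh_zero, sinh_zero, mul_one, mul_zero, sub_self, div_one,
    div_eq_zero_iff, (cosh_pos t).ne', or_false] at this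
  linarith

end LinearODE

def KillingEquations (c₁ c₂ : ℝ × ℝ → ℝ) : Prop :=
  ∀ φ θ : ℝ,
    fderiv ℝ c₁ (φ, θ) (1, 0) + c₂ (φ, θ) * sinh θ = 0 ∧
    fderiv ℝ c₂ (φ, θ) (0, 1) = 0 ∧
    fderiv ℝ c₂ (φ, θ) (1, 0) = cosh θ * fderiv ℝ c₁ (φ, θ) (0, 1) - c₁ (φ, θ) * sinh θ

namespace KillingEquations

variable {c₁ c₂ : ℝ × ℝ → ℝ}

theorem c₂_eq_c₂_zero (H : KillingEquations c₁ c₂) (hd₂ : Differentiable ℝ c₂) (φ θ : ℝ) :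
    c₂ (φ, θ) = c₂ (φ, 0) := by
  refine eq_of_forall_hasDerivAt_zero (f := fun t => c₂ (φ, t)) (fun t => ?_) θ 0
  exact (H φ t).2.1 ▸ (hd₂ (φ, t)).hasDerivAt_partial_snd

theorem fderiv_c₂_fst_eq (H : KillingEquations c₁ c₂) (hd₂ : Differentiable ℝ c₂) (φ θ : ℝ) :
    fderiv ℝ c₂ (φ, θ) (1, 0) = fderiv ℝ c₂ (φ, 0) (1, 0) := by
  have hslice := (hd₂ (φ, θ)).hasDerivAt_partial_fst
  simp only [H.c₂_eq_c₂_zero hd₂ _ θ] at hslice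
  exact hslice.unique (hd₂ (φ, 0)).hasDerivAt_partial_fst

theorem c₁_eq_mul_cosh_add_mul_sinh (H : KillingEquations c₁ c₂) (hd₁ : Differentiable ℝ c₁)
    (hd₂ : Differentiable ℝ c₂) (φ θ : ℝ) :
    c₁ (φ, θ) = c₁ (φ, 0) * cosh θ + fderiv ℝ c₂ (φ, 0) (1, 0) * sinh θ :=
  eq_mul_cosh_add_mul_sinh_of_hasDerivAt (fun t => (hd₁ (φ, t)).hasDerivAt_partial_snd)
    (fun t => by rw [← H.fderiv_c₂_fst_eq hd₂ φ t, (H φ t).2.2]) θ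

theorem c₁_zero_eq (H : KillingEquations c₁ c₂) (hd₁ : Differentiable ℝ c₁) (φ : ℝ) :
    c₁ (φ, 0) = c₁ (0, 0) := by
  refine eq_of_forall_hasDerivAt_zero (f := fun s => c₁ (s, 0)) (fun s => ?_) φ 0
  have h := (H s 0).1
  rw [sinh_zero, mul_zero, add_zero] at h
  simpa only [h] using (hd₁ (s, 0)).hasDerivAt_partial_fst

/-- On the line `θ = 1`, `c₁_eq_mul_cosh_add_mul_sinh` expresses `∂_φ c₂(·, 0)` through
`c₁(·, 1)`, which shows that it is differentiable. -/
theorem hasDerivAt_fderiv_c₂_fst (H : KillingEquations c₁ c₂) (hd₁ : Differentiable ℝ c₁)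
    (hd₂ : Differentiable ℝ c₂) (φ : ℝ) :
    HasDerivAt (fun s => fderiv ℝ c₂ (s, 0) (1, 0)) (-c₂ (φ, 0)) φ := by
  have hsinh : sinh 1 ≠ 0 := (sinh_pos_iff.mpr one_pos).ne'
  have hslice : (fun s => fderiv ℝ c₂ (s, 0) (1, 0))
      = fun s => (c₁ (s, 1) - c₁ (0, 0) * cosh 1) / sinh 1 := by
    funext s
    rw [eq_div_iff hsinh, H.c₁_eq_mul_cosh_add_mul_sinh hd₁ hd₂ s 1, H.c₁_zero_eq hd₁ s]
    ring
  have hderiv : -c₂ (φ, 0) = fderiv ℝ c₁ (φ, 1) (1, 0) / sinh 1 := by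
    rw [eq_div_iff hsinh, ← H.c₂_eq_c₂_zero hd₂ φ 1]
    linear_combination -(H φ 1).1
  rw [hslice, hderiv]
  exact ((hd₁ (φ, 1)).hasDerivAt_partial_fst.sub_const _).div_const _

theorem exists_closed_form (H : KillingEquations c₁ c₂) (hd₁ : Differentiable ℝ c₁)
    (hd₂ : Differentiable ℝ c₂) :
    ∃ B B₁ B₂ : ℝ, ∀ φ θ : ℝ,
      c₁ (φ, θ) = -sinh θ * (B₁ * cos φ + B₂ * sin φ) + B * cosh θ ∧
      c₂ (φ, θ) = -B₁ * sin φ + B₂ * cos φ := by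
  set v : ℝ → ℝ := fun s => c₂ (s, 0)
  set w : ℝ → ℝ := fun s => fderiv ℝ c₂ (s, 0) (1, 0)
  have hv (φ : ℝ) : HasDerivAt v (w φ) φ := (hd₂ (φ, 0)).hasDerivAt_partial_fst
  have hw (φ : ℝ) : HasDerivAt w (-v φ) φ := H.hasDerivAt_fderiv_c₂_fst hd₁ hd₂ φ
  have hnegv (φ : ℝ) : HasDerivAt (-v) (-w φ) φ := (hv φ).neg
  refine ⟨c₁ (0, 0), -w 0, v 0, fun φ θ => ⟨?_, ?_⟩⟩
  · have hwφ : fderiv ℝ c₂ (φ, 0) (1, 0) = w 0 * cos φ + -v 0 * sin φ :=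
      eq_mul_cos_add_mul_sin_of_hasDerivAt hw hnegv φ
    rw [H.c₁_eq_mul_cosh_add_mul_sinh hd₁ hd₂, H.c₁_zero_eq hd₁, hwφ]
    ring
  · have hvφ : c₂ (φ, 0) = v 0 * cos φ + w 0 * sin φ :=
      eq_mul_cos_add_mul_sin_of_hasDerivAt hv hw φ
    rw [H.c₂_eq_c₂_zero hd₂, hvφ]
    ring

end KillingEquations

theorem killingEquations_closed_form (B B₁ B₂ : ℝ) :
    KillingEquations (fun p => -sinh p.2 * (B₁ * cos p.1 + B₂ * sin p.1) + B * cosh p.2)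
      (fun p => -B₁ * sin p.1 + B₂ * cos p.1) := by
  intro φ θ
  have hd₁ : Differentiable ℝ
      (fun p : ℝ × ℝ => -sinh p.2 * (B₁ * cos p.1 + B₂ * sin p.1) + B * cosh p.2) := by fun_prop
  have hd₂ : Differentiable ℝ (fun p : ℝ × ℝ => -B₁ * sin p.1 + B₂ * cos p.1) := by fun_prop
  have h₁φ := (hd₁ (φ, θ)).hasDerivAt_partial_fst.unique
    (((((hasDerivAt_cos φ).const_mul B₁).add ((hasDerivAt_sin φ).const_mul B₂)).const_mul
      (-sinh θ)).add_const (B * cosh θ))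
  have h₁θ := (hd₁ (φ, θ)).hasDerivAt_partial_snd.unique
    (((hasDerivAt_sinh θ).neg.mul_const (B₁ * cos φ + B₂ * sin φ)).add
      ((hasDerivAt_cosh θ).const_mul B))
  have h₂φ := (hd₂ (φ, θ)).hasDerivAt_partial_fst.unique
    (((hasDerivAt_sin φ).const_mul (-B₁)).add ((hasDerivAt_cos φ).const_mul B₂))
  have h₂θ := (hd₂ (φ, θ)).hasDerivAt_partial_snd.unique
    (hasDerivAt_const θ (-B₁ * sin φ + B₂ * cos φ))
  refine ⟨?_, h₂θ, ?_⟩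
  · rw [h₁φ]
    ring
  · rw [h₂φ, h₁θ]
    linear_combination (B₁ * cos φ + B₂ * sin φ) * cosh_sq_sub_sinh_sq θ

/-- Characterization of Killing fields of the metric `dθ² - cosh²θ dφ²`:
the coefficients `(c₁, c₂)` in the orthonormal frame satisfy the Killing PDE system
iff they are of the stated explicit form. Coordinates: `p = (φ, θ)`. -/
theorem stmt_15 (c₁ c₂ : ℝ × ℝ → ℝ) (hc₁ : ContDiff ℝ 2 c₁) (hc₂ : ContDiff ℝ 2 c₂) :
    ((∀ φ θ : ℝ,
        fderiv ℝ c₁ (φ, θ) (1, 0) + c₂ (φ, θ) * sinh θ = 0 ∧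
        fderiv ℝ c₂ (φ, θ) (0, 1) = 0 ∧
        fderiv ℝ c₂ (φ, θ) (1, 0)
          = cosh θ * fderiv ℝ c₁ (φ, θ) (0, 1) - c₁ (φ, θ) * sinh θ)
      ↔
      (∃ B B₁ B₂ : ℝ, ∀ φ θ : ℝ,
        c₁ (φ, θ) = -sinh θ * (B₁ * cos φ + B₂ * sin φ) + B * cosh θ ∧
        c₂ (φ, θ) = -B₁ * sin φ + B₂ * cos φ)) := by
  refine ⟨fun H => KillingEquations.exists_closed_form H (hc₁.differentiable (by norm_num))
    (hc₂.differentiable (by norm_num)), ?_⟩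
  rintro ⟨B, B₁, B₂, h⟩
  obtain rfl : c₁ = fun p => -sinh p.2 * (B₁ * cos p.1 + B₂ * sin p.1) + B * cosh p.2 :=
    funext fun p => (h p.1 p.2).1
  obtain rfl : c₂ = fun p => -B₁ * sin p.1 + B₂ * cos p.1 := funext fun p => (h p.1 p.2).2
  exact killingEquations_closed_form B B₁ B₂
end
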